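/- arXiv:1709.05963 — 2 statements merged into one kernel-verified Lean document; each statement's English description precedes it below -/
import Mathlib

section
/- Let c, σmax, r, T ∈ (0,∞), σmin ∈ (0, σmax), d ∈ ℕ with d ≥ 1, let σ̄ : ℝ → ℝ be defined by σ̄(x) = σmax if x ≥ 0 and σ̄(x) = σmin if x < 0, let g : ℝ^d → ℝ be given by g(x) = c‖x‖², and define u : [0,T] × ℝ^d → ℝ by u(t,x) = exp((r + σmax²)(T − t)) g(x). Then u is smooth, u(T,x) = g(x) for all x, and for all t ∈ [0,T], x = (x_1,...,x_d) ∈ ℝ^d it holds that ∂u/∂t(t,x) + (1/2) Σ_{i=1}^d x_i² · σ̄(∂²u/∂x_i²(t,x))² · ∂²u/∂x_i²(t,x) = r (u(t,x) − ⟨x, ∇ₓu(t,x)⟩). -/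
lemma euc_norm_sq {d : ℕ} (y : EuclideanSpace ℝ (Fin d)) :
    ‖y‖ ^ 2 = ∑ j : Fin d, (y j) ^ 2 := by
  rw [EuclideanSpace.norm_eq, Real.sq_sqrt]
  · simp [Real.norm_eq_abs, sq_abs]
  · positivity

/-- Black-Scholes-Barenblatt verification lemma (Lemma 4.1 of the paper). -/
theorem stmt4 (c σmax σmin r T : ℝ) (hc : 0 < c) (hσmax : 0 < σmax) (hr : 0 < r)
    (hT : 0 < T) (hσmin : 0 < σmin) (hσ : σmin < σmax)
    (d : ℕ) (hd : 1 ≤ d)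
    (σb : ℝ → ℝ) (hσb : ∀ x, σb x = if 0 ≤ x then σmax else σmin)
    (g : EuclideanSpace ℝ (Fin d) → ℝ) (hg : ∀ x, g x = c * ‖x‖ ^ 2)
    (u : ℝ → EuclideanSpace ℝ (Fin d) → ℝ)
    (hu : ∀ t x, u t x = Real.exp ((r + σmax ^ 2) * (T - t)) * g x) :
    ContDiff ℝ (⊤ : ℕ∞) (fun p : ℝ × EuclideanSpace ℝ (Fin d) => u p.1 p.2) ∧
    (∀ x, u T x = g x) ∧
    ∀ t ∈ Set.Icc (0 : ℝ) T, ∀ x : EuclideanSpace ℝ (Fin d),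
      deriv (fun s => u s x) t
        + (1 / 2) * ∑ i : Fin d,
            (x i) ^ 2
              * (σb (deriv (deriv (fun s => u t (WithLp.toLp 2 (Function.update x i s)))) (x i))) ^ 2
              * deriv (deriv (fun s => u t (WithLp.toLp 2 (Function.update x i s)))) (x i)
      = r * (u t x - (inner ℝ x (gradient (fun y => u t y) x) : ℝ)) := by
  set a : ℝ := r + σmax ^ 2 with ha
  refine ⟨?_, ?_, ?_⟩
  · have heq : (fun p : ℝ × EuclideanSpace ℝ (Fin d) => u p.1 p.2)
        = fun p => Real.exp (a * (T - p.1)) * (c * ‖p.2‖ ^ 2) := by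
      funext p; rw [hu, hg]
    rw [heq]
    exact (Real.contDiff_exp.comp (contDiff_const.mul (contDiff_const.sub contDiff_fst))).mul
      (contDiff_const.mul ((contDiff_norm_sq ℝ).comp contDiff_snd))
  · intro x; rw [hu]; simp
  · intro t ht x
    set E : ℝ := Real.exp (a * (T - t)) with hE
    have hEpos : 0 < E := Real.exp_pos _
    set K : ℝ := E * c with hK
    have hKpos : 0 < K := mul_pos hEpos hc
    -- time derivative
    have hderivt : deriv (fun s => u s x) t = -a * K * ‖x‖ ^ 2 := by
      have hdt : HasDerivAt (fun s => Real.exp (a * (T - s)) * (c * ‖x‖ ^ 2))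
          (Real.exp (a * (T - t)) * (a * (0 - 1)) * (c * ‖x‖ ^ 2)) t :=
        ((HasDerivAt.const_mul a
          ((hasDerivAt_const t T).sub (hasDerivAt_id t))).exp).mul_const _
      have h2 : (fun s => u s x) = fun s => Real.exp (a * (T - s)) * (c * ‖x‖ ^ 2) := by
        funext s; rw [hu, hg]
      rw [h2, hdt.deriv, hK, hE]; ring
    -- second space derivatives
    have hsecond : ∀ i : Fin d,
        deriv (deriv (fun s => u t (WithLp.toLp 2 (Function.update x i s)))) (x i) = 2 * K := by
      intro i
      set S : ℝ := ∑ j ∈ Finset.univ.erase i, (x j) ^ 2 with hS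
      have hfun : (fun s => u t (WithLp.toLp 2 (Function.update x i s))) = fun s => K * (s ^ 2 + S) := by
        funext s
        rw [hu, hg, euc_norm_sq (WithLp.toLp 2 (Function.update x i s)), WithLp.ofLp_toLp,
          ← Finset.add_sum_erase _ (fun j => (Function.update x i s j) ^ 2)
            (Finset.mem_univ i)]
        have h1 : Function.update x i s i = s := Function.update_self i s x
        have h2 : ∑ j ∈ Finset.univ.erase i, (Function.update x i s j) ^ 2 = S := by
          rw [hS]
          exact Finset.sum_congr rfl fun j hj => by
            rw [Function.update_of_ne (Finset.ne_of_mem_erase hj)]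
        rw [h1, h2, hK, hE]; ring
      have hd1 : deriv (fun s => u t (WithLp.toLp 2 (Function.update x i s))) = fun s => K * (2 * s) := by
        funext s
        rw [hfun]
        have hds : HasDerivAt (fun s : ℝ => K * (s ^ 2 + S)) (K * (2 * s)) s := by
          have := HasDerivAt.const_mul K ((hasDerivAt_pow 2 s).add_const S)
          simpa using this
        exact hds.deriv
      rw [hd1]
      have h2s : HasDerivAt (fun y : ℝ => 2 * y) (2 : ℝ) (x i) := by
        simpa using HasDerivAt.const_mul (2 : ℝ) (hasDerivAt_id (x i))
      have hds : HasDerivAt (fun s : ℝ => K * (2 * s)) (K * 2) (x i) :=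
        HasDerivAt.const_mul K h2s
      rw [hds.deriv]; ring
    -- gradient
    have hgrad : gradient (fun y => u t y) x = (2 * K) • x := by
      have hf : HasFDerivAt (fun y : EuclideanSpace ℝ (Fin d) => K * ‖y‖ ^ 2)
          (K • (2 • (innerSL ℝ x))) x :=
        ((hasStrictFDerivAt_norm_sq x).hasFDerivAt).const_mul K
      have hgr : HasGradientAt (fun y : EuclideanSpace ℝ (Fin d) => K * ‖y‖ ^ 2)
          ((2 * K) • x) x := by
        rw [hasGradientAt_iff_hasFDerivAt]
        refine hf.congr_fderiv ?_
        ext y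
        simp [InnerProductSpace.toDual_apply_apply, real_inner_smul_left]
        ring
      have hfun : (fun y => u t y) = fun y : EuclideanSpace ℝ (Fin d) => K * ‖y‖ ^ 2 := by
        funext y; rw [hu, hg, hK, hE]; ring
      rw [hfun, hgr.gradient]
    have hinner : (inner ℝ x (gradient (fun y => u t y) x) : ℝ) = 2 * K * ‖x‖ ^ 2 := by
      rw [hgrad, real_inner_smul_right, real_inner_self_eq_norm_sq]
    have hσbval : σb (2 * K) = σmax := by
      rw [hσb, if_pos (by positivity)]
    have hsum : ∑ i : Fin d, (x i) ^ 2
        * (σb (deriv (deriv (fun s => u t (WithLp.toLp 2 (Function.update x i s)))) (x i))) ^ 2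
        * deriv (deriv (fun s => u t (WithLp.toLp 2 (Function.update x i s)))) (x i)
        = σmax ^ 2 * (2 * K) * ‖x‖ ^ 2 := by
      rw [euc_norm_sq x, Finset.mul_sum]
      refine Finset.sum_congr rfl fun i _ => ?_
      rw [hsecond i, hσbval]; ring
    rw [hderivt, hsum, hinner, hu, hg, hK, hE, ha]
    ring
end

section
/- Let c, σmax, T ∈ (0,∞), σmin ∈ (0, σmax), d ∈ ℕ with d ≥ 1, let σ̄ : ℝ → ℝ be defined by σ̄(x) = σmax if x ≥ 0 and σ̄(x) = σmin if x < 0, let g : ℝ^d → ℝ be given by g(x) = c‖x‖², and define u : [0,T] × ℝ^d → ℝ by u(t,x) = g(x) + c d σmax² (T − t). Then u is smooth, u(T,x) = g(x) for all x, and for all t ∈ [0,T] and x ∈ ℝ^d it holds that ∂u/∂t(t,x) + (1/2) Σ_{i=1}^d σ̄(∂²u/∂x_i²(t,x))² · ∂²u/∂x_i²(t,x) = 0. -/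
/-- G-Brownian-motion PDE verification lemma (Lemma 4.2 of the paper). -/
theorem stmt7 (c σmax σmin T : ℝ) (hc : 0 < c) (hσmax : 0 < σmax) (hT : 0 < T)
    (hσmin : 0 < σmin) (hσ : σmin < σmax)
    (d : ℕ) (hd : 1 ≤ d)
    (σb : ℝ → ℝ) (hσb : ∀ x, σb x = if 0 ≤ x then σmax else σmin)
    (g : EuclideanSpace ℝ (Fin d) → ℝ) (hg : ∀ x, g x = c * ‖x‖ ^ 2)
    (u : ℝ → EuclideanSpace ℝ (Fin d) → ℝ)
    (hu : ∀ t x, u t x = g x + c * d * σmax ^ 2 * (T - t)) :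
    ContDiff ℝ (⊤ : ℕ∞) (fun p : ℝ × EuclideanSpace ℝ (Fin d) => u p.1 p.2) ∧
    (∀ x, u T x = g x) ∧
    ∀ t ∈ Set.Icc (0 : ℝ) T, ∀ x : EuclideanSpace ℝ (Fin d),
      deriv (fun s => u s x) t
        + (1 / 2) * ∑ i : Fin d,
            (σb (deriv (deriv (fun s => u t (WithLp.toLp 2 (Function.update x i s)))) (x i))) ^ 2
              * deriv (deriv (fun s => u t (WithLp.toLp 2 (Function.update x i s)))) (x i)
      = 0 := by
  have hnorm : ∀ y : EuclideanSpace ℝ (Fin d), ‖y‖ ^ 2 = ∑ j, (y j) ^ 2 := by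
    intro y
    rw [EuclideanSpace.norm_eq, Real.sq_sqrt (by positivity)]
    simp [sq_abs]
  refine ⟨?_, ?_, ?_⟩
  · have heq : (fun p : ℝ × EuclideanSpace ℝ (Fin d) => u p.1 p.2)
        = fun p => c * ‖p.2‖ ^ 2 + c * d * σmax ^ 2 * (T - p.1) := by
      funext p; rw [hu, hg]
    rw [heq]
    exact (contDiff_const.mul ((contDiff_norm_sq ℝ).comp contDiff_snd)).add
      (contDiff_const.mul (contDiff_const.sub contDiff_fst))
  · intro x; rw [hu]; ring
  · intro t ht x
    -- time derivative
    have hdt : deriv (fun s => u s x) t = -(c * d * σmax ^ 2) := by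
      have h1 : HasDerivAt (fun s : ℝ => g x + c * d * σmax ^ 2 * (T - s))
          (-(c * d * σmax ^ 2)) t := by
        have := ((hasDerivAt_id t).const_sub T).const_mul (c * d * σmax ^ 2)
        have := this.const_add (g x)
        simpa using this
      have heq : (fun s => u s x) = fun s : ℝ => g x + c * d * σmax ^ 2 * (T - s) := by
        funext s; rw [hu]
      rw [heq, h1.deriv]
    -- space second derivatives
    have hdx : ∀ i : Fin d,
        deriv (deriv (fun s => u t (WithLp.toLp 2 (Function.update x i s)))) (x i) = 2 * c := by
      intro i
      set C : ℝ := c * ∑ j ∈ Finset.univ \ {i}, (x j) ^ 2 + c * d * σmax ^ 2 * (T - t) with hC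
      have heq : (fun s => u t (WithLp.toLp 2 (Function.update x i s))) = fun s : ℝ => c * s ^ 2 + C := by
        funext s
        rw [hu, hg, hnorm, WithLp.ofLp_toLp]
        have hsum : ∑ j, (Function.update x i s j) ^ 2
            = s ^ 2 + ∑ j ∈ Finset.univ \ {i}, (x j) ^ 2 := by
          have : (fun j => (Function.update x i s j) ^ 2)
              = Function.update (fun j => (x j) ^ 2) i (s ^ 2) := by
            funext j
            rcases eq_or_ne j i with h | h
            · subst h; simp
            · simp [Function.update_of_ne h]
          rw [this, Finset.sum_update_of_mem (Finset.mem_univ i)]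
        rw [hsum]; ring
      have hd1 : deriv (fun s : ℝ => c * s ^ 2 + C) = fun s => 2 * c * s := by
        funext s
        have h1 : HasDerivAt (fun s : ℝ => c * s ^ 2 + C) (2 * c * s) s := by
          have := ((hasDerivAt_pow 2 s).const_mul c).add_const C
          simpa [mul_comm, mul_assoc, mul_left_comm] using this
        exact h1.deriv
      rw [heq, hd1]
      have h2 : HasDerivAt (fun s : ℝ => 2 * c * s) (2 * c) (x i) := by
        simpa using (hasDerivAt_id (x i)).const_mul (2 * c)
      exact h2.deriv
    have hσ2c : σb (2 * c) = σmax := by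
      rw [hσb]; rw [if_pos (by positivity)]
    rw [hdt]
    have : ∀ i : Fin d,
        (σb (deriv (deriv (fun s => u t (WithLp.toLp 2 (Function.update x i s)))) (x i))) ^ 2
          * deriv (deriv (fun s => u t (WithLp.toLp 2 (Function.update x i s)))) (x i)
        = σmax ^ 2 * (2 * c) := by
      intro i; rw [hdx i, hσ2c]
    rw [Finset.sum_congr rfl (fun i _ => this i)]
    simp [Finset.card_univ]
    ring
end
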